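/- Fix an integer n > 1, f ∈ ℤ_n and k ∈ {0,…,n−1}. Then there exists a t-path γ with t = 2(n−1), γ(0) = f, γ(t) = f, and phase exponent p(γ) ≡ 2k (mod n'), where n' = 2n for even n and n' = n for odd n. (Such a path may be taken to zig-zag k times between f and f+1 and then remain at f.) -/

import Mathlib

open scoped Classical

/-- `efn x = exp(2πi x)`. -/
noncomputable def efn (x : ℝ) : ℂ := Complex.exp (2 * Real.pi * Complex.I * x)

/-- `ω_n`: a (2n)-th root of unity for even `n`, an n-th root of unity for odd `n`. -/
noncomputable def omegaN (n : ℕ) : ℂ :=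
  if Even n then efn (1 / (2 * n)) else efn (1 / n)

/-- `n' = 2n` for even `n`, `n' = n` for odd `n`. -/
def nPrime (n : ℕ) : ℕ := if Even n then 2 * n else n

/-- The `n`-site hopper transfer matrix `U(n)_{jk} = ω_n^{(j-k)^2}/√n`,
with `(j-k)^2` computed from the integer representatives in `{0,…,n-1}`. -/
noncomputable def hopperU (n : ℕ) [NeZero n] : Matrix (ZMod n) (ZMod n) ℂ :=
  fun j k => omegaN n ^ (((j.val : ℤ) - (k.val : ℤ)).natAbs ^ 2) / (Real.sqrt n : ℂ)

/-- The amplitude `a[γ] = ψ_{γ(0)} ∏_{t'=0}^{t-1} U(n)_{γ(t') γ(t'+1)}` of a `t`-path. -/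
noncomputable def amp (n : ℕ) [NeZero n] (ψ : ZMod n → ℂ) (t : ℕ)
    (γ : Fin (t + 1) → ZMod n) : ℂ :=
  ψ (γ 0) * ∏ k : Fin t, hopperU n (γ k.castSucc) (γ k.succ)

/-- The (un-reduced) phase exponent `Σ_{t'=0}^{t-1} (γ(t') - γ(t'+1))²` of a `t`-path,
differences computed via the integer representatives. -/
def phaseSum (n : ℕ) [NeZero n] (t : ℕ) (γ : Fin (t + 1) → ZMod n) : ℤ :=
  ∑ k : Fin t, (((γ k.castSucc).val : ℤ) - ((γ k.succ).val : ℤ)) ^ 2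

/-- Restriction of a `t`-path to a `t₀`-path (`t₀ ≤ t`). -/
def restrictPath (n : ℕ) {t₀ t : ℕ} (h : t₀ ≤ t) (γ : Fin (t + 1) → ZMod n) :
    Fin (t₀ + 1) → ZMod n :=
  fun k => γ (Fin.castLE (Nat.succ_le_succ h) k)

/-- `s^t_{ifp}(E)`: the number of `t`-paths in `E_t` starting at `i`, ending at `f`,
with phase exponent `p` (mod `n'`). -/
noncomputable def sCount (n : ℕ) [NeZero n] {t₀ : ℕ} (t : ℕ) (h : t₀ ≤ t)
    (E : Set (Fin (t₀ + 1) → ZMod n)) (i f : ZMod n) (p : ℕ) : ℕ :=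
  Set.ncard {γ : Fin (t + 1) → ZMod n |
    restrictPath n h γ ∈ E ∧ γ 0 = i ∧ γ (Fin.last t) = f ∧
    phaseSum n t γ % (nPrime n : ℤ) = (p : ℤ)}

/-- The quantum measure at time `t` of a set `F` of `t`-paths:
`μ_t(F) = Σ_f |Σ_{γ ∈ F, γ(t)=f} a[γ]|²`. -/
noncomputable def mu (n : ℕ) [NeZero n] (ψ : ZMod n → ℂ) (t : ℕ)
    (F : Set (Fin (t + 1) → ZMod n)) : ℝ :=
  ∑ f : ZMod n, ‖∑ γ : Fin (t + 1) → ZMod n,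
    if γ ∈ F ∧ γ (Fin.last t) = f then amp n ψ t γ else 0‖ ^ 2

/-! The path that zig-zags `k` times between `f` and `f + 1` and then rests at `f` has phase
sum `2k · d²`, where `d = f.val - (f + 1).val`. Either `d = -1`, or `f = n - 1` and
`d² = (n - 1)² = 1 + n (n - 2)`; in both cases `d² ≡ 1 (mod n')`, because `n'` divides
`n (n - 2)` (for even `n` both factors are even). -/

open Finset

lemma nPrime_dvd_mul_sub_two (n : ℕ) : (nPrime n : ℤ) ∣ n * (n - 2) := by
  unfold nPrime
  split_ifs with h
  · obtain ⟨m, rfl⟩ := h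
    exact ⟨m - 1, by push_cast; ring⟩
  · exact dvd_mul_right _ _

lemma sub_one_sq_modEq_one (n : ℕ) : ((n : ℤ) - 1) ^ 2 ≡ 1 [ZMOD nPrime n] :=
  (Int.modEq_iff_dvd.mpr (by convert nPrime_dvd_mul_sub_two n using 1; ring)).symm

lemma val_sub_val_add_one_sq_modEq {n : ℕ} [NeZero n] (x : ZMod n) :
    ((x.val : ℤ) - (x + 1).val) ^ 2 ≡ 1 [ZMOD nPrime n] := by
  have hx := x.val_lt
  rw [ZMod.val_add, ZMod.val_one_eq_one_mod, Nat.add_mod_mod]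
  rcases Nat.lt_or_ge (x.val + 1) n with h | h
  · rw [Nat.mod_eq_of_lt h, Nat.cast_succ, sub_add_cancel_left, neg_one_sq]
  · rw [show x.val + 1 = n by omega, Nat.mod_self, show x.val = n - 1 by omega,
      Nat.cast_sub (by omega)]
    simpa using sub_one_sq_modEq_one n

lemma sum_fin_ite_val_lt {M : Type*} [AddCommMonoid M] {m t : ℕ} (h : m ≤ t) (c : M) :
    ∑ j : Fin t, (if (j : ℕ) < m then c else 0) = m • c := by
  rw [Fin.sum_univ_eq_sum_range (fun j => if j < m then c else 0), ← sum_filter,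
    sum_const, show (range t).filter (· < m) = range m by ext; simp; omega, card_range]

def zigzag {n : ℕ} (f : ZMod n) (k t : ℕ) : Fin (t + 1) → ZMod n :=
  fun j => if Odd (j : ℕ) ∧ (j : ℕ) < 2 * k then f + 1 else f

section zigzag

variable {n : ℕ} (f : ZMod n) {k t : ℕ}

lemma zigzag_zero : zigzag f k t 0 = f := by
  simp [zigzag]

lemma zigzag_last (h : 2 * k ≤ t) : zigzag f k t (Fin.last t) = f := by
  simp only [zigzag, Fin.val_last, ite_eq_right_iff, and_imp]
  omega

lemma zigzag_step_sq [NeZero n] (j : Fin t) :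
    (((zigzag f k t j.castSucc).val : ℤ) - (zigzag f k t j.succ).val) ^ 2 =
      if (j : ℕ) < 2 * k then ((f.val : ℤ) - (f + 1).val) ^ 2 else 0 := by
  simp only [zigzag, Fin.val_castSucc, Fin.val_succ, Nat.odd_iff]
  split_ifs <;> first | omega | ring

lemma phaseSum_zigzag [NeZero n] (h : 2 * k ≤ t) :
    phaseSum n t (zigzag f k t) = 2 * k * ((f.val : ℤ) - (f + 1).val) ^ 2 := by
  simp only [phaseSum, zigzag_step_sq, sum_fin_ite_val_lt h, nsmul_eq_mul]
  push_cast
  ring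

end zigzag

theorem stmt5_general (n : ℕ) [NeZero n] (f : ZMod n) (k : ℕ) (hk : k < n) :
    ∃ γ : Fin (2 * (n - 1) + 1) → ZMod n,
      γ 0 = f ∧ γ (Fin.last (2 * (n - 1))) = f ∧
      Int.ModEq (nPrime n) (phaseSum n (2 * (n - 1)) γ) (2 * k) := by
  have hkt : 2 * k ≤ 2 * (n - 1) := by omega
  refine ⟨zigzag f k _, zigzag_zero f, zigzag_last f hkt, ?_⟩
  rw [phaseSum_zigzag f hkt]
  simpa using (val_sub_val_add_one_sq_modEq f).mul_left (2 * k : ℤ)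

/-- For any `f ∈ ℤ_n` and `k ∈ {0,…,n-1}` there is a `2(n-1)`-path
starting and ending at `f` whose phase exponent is `≡ 2k (mod n')`. -/
theorem stmt5 (n : ℕ) [NeZero n] (hn : 1 < n) (f : ZMod n) (k : ℕ) (hk : k < n) :
    ∃ γ : Fin (2 * (n - 1) + 1) → ZMod n,
      γ 0 = f ∧ γ (Fin.last (2 * (n - 1))) = f ∧
      Int.ModEq (nPrime n) (phaseSum n (2 * (n - 1)) γ) (2 * k) :=
  stmt5_general n f k hk
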